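/- arXiv:1502.07650 — 4 statements merged into one kernel-verified Lean document; each statement's English description precedes it below -/
import Mathlib

section
/- Every translation-invariant bounded linear operator from L²(ℝ;ℂ) to L^∞(ℝ;ℂ) is a convolution operator: if L : L²(ℝ;ℂ) → L^∞(ℝ;ℂ) is a continuous linear map such that for every K ∈ ℝ and every x ∈ L²(ℝ;ℂ) one has L(x(· + K))(t) = (Lx)(t + K) for almost every t, then there exists h ∈ L²(ℝ;ℂ) such that for every x ∈ L²(ℝ;ℂ), (Lx)(t) = ∫_{-∞}^{∞} x(s) h(t − s) ds for almost every t ∈ ℝ. -/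
/-!
Translation is continuous on `L²`, so by invariance `s ↦ (L x)(· + s)` is continuous into `L^∞`.
The moving averages `δ⁻¹ ∫_t^{t+δ} L x` are then continuous and essentially uniformly close to
`L x`, so `L x` has a continuous representative, and `L` lifts to a bounded operator into bounded
continuous functions. Evaluation at `0` of the lift is a bounded functional on `L²`, hence equal to
`⟪g, ·⟫` by Riesz, and invariance gives `(L x)(t) = ⟪g, x(· + t)⟫ = (x ⋆ h)(t)` with
`h(v) = conj (g (-v))`.
-/

open MeasureTheory Filter Topology Set ComplexConjugate
open scoped ENNReal BoundedContinuousFunction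

section ContinuousRepresentative

variable {X : Type*} [TopologicalSpace X] [MeasurableSpace X] {μ : Measure X} [μ.IsOpenPosMeasure]

theorem MeasureTheory.Measure.le_of_ae_le {Y : Type*} [TopologicalSpace Y] [LinearOrder Y]
    [OrderClosedTopology Y] {f g : X → Y} (h : f ≤ᵐ[μ] g) (hf : Continuous f)
    (hg : Continuous g) : f ≤ g := fun x =>
  (isClosed_le hf hg).closure_subset (μ.dense_of_ae h x)

theorem exists_continuous_ae_eq_of_ae_uniform_approx {Y ι : Type*} [MetricSpace Y]
    [CompleteSpace Y] {l : Filter ι} [l.NeBot] {G : ι → X → Y} (hG : ∀ i, Continuous (G i))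
    {f : X → Y} (h : ∀ ε > 0, ∀ᶠ i in l, ∀ᵐ x ∂μ, dist (G i x) (f x) ≤ ε) :
    ∃ F : X → Y, Continuous F ∧ f =ᵐ[μ] F := by
  have hCauchy : UniformCauchySeqOn G l univ := by
    intro u hu
    obtain ⟨ε, hε, hεu⟩ := Metric.mem_uniformity_dist.1 hu
    filter_upwards [(h (ε / 3) (by positivity)).prod_mk (h (ε / 3) (by positivity))]
      with ⟨i, j⟩ ⟨hi, hj⟩ x _
    have hij : (fun x => dist (G i x) (G j x)) ≤ fun _ => 2 * (ε / 3) := by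
      refine μ.le_of_ae_le ?_ ((hG i).dist (hG j)) continuous_const
      filter_upwards [hi, hj] with x hix hjx
      linarith [dist_triangle_right (G i x) (G j x) (f x)]
    exact hεu (by linarith [hij x])
  choose F hF using fun x => cauchy_iff_exists_le_nhds.1 (hCauchy.cauchy_map (mem_univ x))
  have hlim : TendstoUniformly G F l := tendstoUniformlyOn_univ.1
    (hCauchy.tendstoUniformlyOn_of_tendsto fun x _ => hF x)
  refine ⟨F, hlim.continuous (Frequently.of_forall hG), ?_⟩
  have hclose : ∀ n : ℕ, ∀ᵐ x ∂μ, dist (f x) (F x) ≤ 2 * (1 / ((n : ℝ) + 1)) := by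
    intro n
    obtain ⟨i, hi, hiF⟩ := ((h _ (Nat.one_div_pos_of_nat (n := n))).and
      (Metric.tendstoUniformly_iff.1 hlim _ (Nat.one_div_pos_of_nat (n := n)))).exists
    filter_upwards [hi] with x hx
    linarith [dist_triangle_left (f x) (F x) (G i x), dist_comm (F x) (G i x), hiF x]
  filter_upwards [ae_all_iff.2 hclose] with x hx
  refine eq_of_forall_dist_le fun ε hε => ?_
  obtain ⟨n, hn⟩ := exists_nat_one_div_lt (half_pos hε)
  linarith [hx n]

end ContinuousRepresentative

theorem MeasureTheory.Lp.ae_norm_le_norm {α E : Type*} {m : MeasurableSpace α} {μ : Measure α}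
    [NormedAddCommGroup E] (f : Lp E ∞ μ) : ∀ᵐ x ∂μ, ‖f x‖ ≤ ‖f‖ := by
  rw [Lp.norm_def, toReal_eLpNorm (Lp.aestronglyMeasurable f)]
  exact ae_le_lpNorm_exponent_top (Lp.memLp f)

theorem ContinuousLinearMap.exists_boundedContinuous_ae_eq {𝕜 V F X : Type*}
    [NontriviallyNormedField 𝕜] [NormedAddCommGroup V] [NormedSpace 𝕜 V] [NormedAddCommGroup F]
    [NormedSpace 𝕜 F] [TopologicalSpace X] [MeasurableSpace X] {μ : Measure X}
    [μ.IsOpenPosMeasure] (T : V →L[𝕜] Lp F ∞ μ)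
    (hT : ∀ v, ∃ g : X → F, Continuous g ∧ T v =ᵐ[μ] g) :
    ∃ S : V →L[𝕜] X →ᵇ F, ∀ v, T v =ᵐ[μ] S v := by
  choose g hgc hg using hT
  have hbound (v : V) (x : X) : ‖g v x‖ ≤ ‖T v‖ := by
    refine μ.le_of_ae_le ?_ (hgc v).norm continuous_const x
    filter_upwards [hg v, Lp.ae_norm_le_norm (T v)] with y hy hTy
    rwa [← hy]
  have hunique (v : V) {k : X → F} (hk : Continuous k) (h : T v =ᵐ[μ] k) : g v = k :=
    ((hgc v).ae_eq_iff_eq μ hk).1 ((hg v).symm.trans h)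
  let S : V →ₗ[𝕜] X →ᵇ F :=
    { toFun := fun v => .ofNormedAddCommGroup (g v) (hgc v) ‖T v‖ (hbound v)
      map_add' := fun v w => by
        ext x
        exact congrFun (hunique (v + w) ((hgc v).add (hgc w))
          (by rw [map_add]; exact (Lp.coeFn_add _ _).trans ((hg v).add (hg w)))) x
      map_smul' := fun c v => by
        ext x
        exact congrFun (hunique (c • v) ((hgc v).const_smul c)
          (by rw [map_smul]; exact (Lp.coeFn_smul _ _).trans ((hg v).const_smul c))) x }
  refine ⟨S.mkContinuous ‖T‖ fun v => ?_, hg⟩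
  exact (BoundedContinuousFunction.norm_le (by positivity)).2 fun x =>
    (hbound v x).trans (T.le_opNorm v)

theorem MeasureTheory.LocallyIntegrable.intervalIntegrable {E : Type*} [NormedAddCommGroup E]
    {f : ℝ → E} (hf : LocallyIntegrable f) (a b : ℝ) : IntervalIntegrable f volume a b :=
  intervalIntegrable_iff.2 <| (hf.integrableOn_isCompact isCompact_uIcc).mono_set uIoc_subset_uIcc

section MovingAverage

variable {E : Type*} [NormedAddCommGroup E] [NormedSpace ℝ E] {f : ℝ → E}

noncomputable def movingAverage (f : ℝ → E) (δ t : ℝ) : E := δ⁻¹ • ∫ s in t..t + δ, f s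

theorem continuous_movingAverage (hf : LocallyIntegrable f) (δ : ℝ) :
    Continuous (movingAverage f δ) := by
  have hprim := intervalIntegral.continuous_primitive hf.intervalIntegrable 0
  have h : movingAverage f δ = fun t => δ⁻¹ • ((∫ s in 0..t + δ, f s) - ∫ s in 0..t, f s) := by
    ext t
    rw [movingAverage, intervalIntegral.integral_interval_sub_left (hf.intervalIntegrable _ _)
      (hf.intervalIntegrable _ _)]
  rw [h]
  exact continuous_const.smul ((hprim.comp (continuous_add_const δ)).sub hprim)

theorem ae_norm_movingAverage_sub_le [CompleteSpace E] (hfm : StronglyMeasurable f)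
    (hf : LocallyIntegrable f) {δ ε : ℝ} (hδ : 0 < δ)
    (h : ∀ s ∈ Ioc 0 δ, ∀ᵐ t, ‖f (t + s) - f t‖ ≤ ε) :
    ∀ᵐ t, ‖movingAverage f δ t - f t‖ ≤ ε := by
  have hmeas : MeasurableSet {p : ℝ × ℝ | ‖f (p.2 + p.1) - f p.2‖ ≤ ε} :=
    measurableSet_le (((hfm.comp_measurable (measurable_snd.add measurable_fst)).sub
      (hfm.comp_measurable measurable_snd)).norm.measurable) measurable_const
  have hswap : ∀ᵐ t, ∀ᵐ s ∂volume.restrict (Ioc 0 δ), ‖f (t + s) - f t‖ ≤ ε :=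
    (Measure.ae_ae_comm hmeas).1 <| (ae_restrict_mem measurableSet_Ioc).mono h
  filter_upwards [hswap] with t ht
  have hint : IntervalIntegrable (fun s => f (t + s)) volume 0 δ := by
    simpa using (hf.intervalIntegrable t (t + δ)).comp_add_left t
  have hdiff : movingAverage f δ t - f t = δ⁻¹ • ∫ s in 0..δ, f (t + s) - f t := by
    rw [intervalIntegral.integral_sub hint intervalIntegrable_const,
      intervalIntegral.integral_comp_add_left, intervalIntegral.integral_const, movingAverage,
      smul_sub, smul_smul, add_zero, sub_zero, inv_mul_cancel₀ hδ.ne', one_smul]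
  calc ‖movingAverage f δ t - f t‖
      ≤ δ⁻¹ * ∫ _ in (0 : ℝ)..δ, ε := by
        rw [hdiff, norm_smul, Real.norm_of_nonneg (inv_nonneg.2 hδ.le)]
        gcongr
        exact intervalIntegral.norm_integral_le_of_norm_le hδ.le
          ((ae_restrict_iff' measurableSet_Ioc).1 ht) intervalIntegrable_const
    _ = ε := by
        rw [intervalIntegral.integral_const, sub_zero, smul_eq_mul, ← mul_assoc,
          inv_mul_cancel₀ hδ.ne', one_mul]

theorem exists_continuous_ae_eq_of_translate_uniformly_close [CompleteSpace E]
    (hf : LocallyIntegrable f) (htrans : ∀ ε > 0, ∀ᶠ s in 𝓝 0, ∀ᵐ t, ‖f (t + s) - f t‖ ≤ ε) :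
    ∃ F : ℝ → E, Continuous F ∧ f =ᵐ[volume] F := by
  -- the Fubini step of `ae_norm_movingAverage_sub_le` needs a strongly measurable representative
  set g := hf.aestronglyMeasurable.mk f
  have hfg : f =ᵐ[volume] g := hf.aestronglyMeasurable.ae_eq_mk
  have hg : LocallyIntegrable g := hf.congr hfg
  have hgtrans : ∀ ε > 0, ∀ᶠ s in 𝓝 0, ∀ᵐ t, ‖g (t + s) - g t‖ ≤ ε := by
    intro ε hε
    filter_upwards [htrans ε hε] with s hs
    have hfg_shift := (measurePreserving_add_right volume s).quasiMeasurePreserving.ae_eq_comp hfg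
    filter_upwards [hs, hfg, hfg_shift] with t ht hft hft_shift
    rwa [← hft, ← show f (t + s) = g (t + s) from hft_shift]
  have happrox : ∀ ε > 0, ∀ᶠ δ in 𝓝[>] 0, ∀ᵐ t, dist (movingAverage g δ t) (g t) ≤ ε := by
    intro ε hε
    obtain ⟨δ₀, hδ₀, hsmall⟩ := Metric.eventually_nhds_iff.1 (hgtrans ε hε)
    filter_upwards [Ioo_mem_nhdsGT hδ₀] with δ hδ
    simp only [dist_eq_norm]
    refine ae_norm_movingAverage_sub_le hf.aestronglyMeasurable.stronglyMeasurable_mk hg hδ.1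
      fun s hs => hsmall ?_
    rw [Real.dist_0_eq_abs, abs_of_pos hs.1]
    exact hs.2.trans_lt hδ.2
  obtain ⟨F, hFc, hgF⟩ :=
    exists_continuous_ae_eq_of_ae_uniform_approx (continuous_movingAverage hg) happrox
  exact ⟨F, hFc, hfg.trans hgF⟩

end MovingAverage

section Translation

variable {E : Type*} [NormedAddCommGroup E] {p : ℝ≥0∞}

noncomputable def translateLp (K : ℝ) :
    Lp E p (volume : Measure ℝ) → Lp E p (volume : Measure ℝ) :=
  Lp.compMeasurePreserving (· + K) (measurePreserving_add_right volume K)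

theorem coeFn_translateLp (K : ℝ) (x : Lp E p (volume : Measure ℝ)) :
    translateLp K x =ᵐ[volume] fun s => x (s + K) :=
  Lp.coeFn_compMeasurePreserving _ _

theorem translateLp_zero (x : Lp E p (volume : Measure ℝ)) : translateLp 0 x = x :=
  Lp.ext <| (coeFn_translateLp 0 x).trans <| .of_forall fun s => by simp only [add_zero]

theorem tendsto_translateLp_zero [Fact (1 ≤ p)] (hp : p ≠ ∞) (x : Lp E p (volume : Measure ℝ)) :
    Tendsto (fun K => translateLp K x) (𝓝 0) (𝓝 x) := by
  have hshift : Continuous fun K : ℝ => (⟨(· + K), continuous_add_const K⟩ : C(ℝ, ℝ)) :=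
    ContinuousMap.continuous_of_continuous_uncurry _ (continuous_snd.add continuous_fst)
  have hcont : Continuous fun K => translateLp K x :=
    continuous_const.compMeasurePreservingLp hshift
      (fun K => measurePreserving_add_right volume K) hp
  convert hcont.tendsto 0
  exact (translateLp_zero x).symm

theorem exists_continuous_ae_eq_of_translateLp_comm {F : Type*} [NormedAddCommGroup F]
    [NormedSpace ℝ F] [CompleteSpace F] [Fact (1 ≤ p)] (hp : p ≠ ∞)
    {L : Lp E p (volume : Measure ℝ) → Lp F ∞ (volume : Measure ℝ)} (hLc : Continuous L)
    (hL : ∀ K x, L (translateLp K x) =ᵐ[volume] fun t => L x (t + K))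
    (x : Lp E p (volume : Measure ℝ)) :
    ∃ g : ℝ → F, Continuous g ∧ L x =ᵐ[volume] g := by
  refine exists_continuous_ae_eq_of_translate_uniformly_close
    ((Lp.memLp (L x)).locallyIntegrable le_top) fun ε hε => ?_
  have hLx : Tendsto (fun K => ‖L (translateLp K x) - L x‖) (𝓝 0) (𝓝 0) :=
    tendsto_iff_norm_sub_tendsto_zero.1 ((hLc.tendsto x).comp (tendsto_translateLp_zero hp x))
  filter_upwards [hLx.eventually (ge_mem_nhds hε)] with K hK
  filter_upwards [Lp.ae_norm_le_norm (L (translateLp K x) - L x),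
    Lp.coeFn_sub (L (translateLp K x)) (L x), hL K x] with t hnorm hsub htranslate
  rw [hsub, Pi.sub_apply, htranslate] at hnorm
  exact hnorm.trans hK

end Translation

theorem inner_translateLp_eq_integral_mul (g x : Lp ℂ 2 (volume : Measure ℝ)) (t : ℝ)
    {h : ℝ → ℂ} (hh : h =ᵐ[volume] fun v => conj (g (-v))) :
    inner ℂ g (translateLp t x) = ∫ s, x s * h (t - s) := by
  have hh_reflect : (fun s => h (t - s)) =ᵐ[volume] fun s => conj (g (s - t)) := by
    filter_upwards
      [(Measure.measurePreserving_sub_left volume t).quasiMeasurePreserving.ae_eq_comp hh]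
      with s hs
    simp only [Function.comp_apply, neg_sub] at hs
    exact hs
  calc inner ℂ g (translateLp t x) = ∫ s, x (s + t) * conj (g s) := by
        rw [L2.inner_def]
        refine integral_congr_ae ?_
        filter_upwards [coeFn_translateLp t x] with s hs
        rw [RCLike.inner_apply, hs]
    _ = ∫ s, x s * conj (g (s - t)) := by
        simpa only [add_sub_cancel_right] using
          integral_add_right_eq_self (fun s => x s * conj (g (s - t))) t
    _ = ∫ s, x s * h (t - s) :=
        integral_congr_ae <| hh_reflect.mono fun s hs => congrArg (x s * ·) hs.symm

/-- Every translation-invariant bounded linear operator from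
`L²(ℝ;ℂ)` to `L^∞(ℝ;ℂ)` is a convolution operator. -/
theorem translation_invariant_operator_is_convolution
    (L : Lp ℂ 2 (volume : Measure ℝ) →L[ℂ] Lp ℂ ⊤ (volume : Measure ℝ))
    (hinv : ∀ (K : ℝ) (x y : Lp ℂ 2 (volume : Measure ℝ)),
      (y : ℝ → ℂ) =ᵐ[volume] (fun s => x (s + K)) →
      (L y : ℝ → ℂ) =ᵐ[volume] (fun t => L x (t + K))) :
    ∃ h : Lp ℂ 2 (volume : Measure ℝ),
      ∀ x : Lp ℂ 2 (volume : Measure ℝ),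
        (L x : ℝ → ℂ) =ᵐ[volume] (fun t => ∫ s : ℝ, x s * h (t - s)) := by
  have hL (K : ℝ) (x : Lp ℂ 2 (volume : Measure ℝ)) :
      L (translateLp K x) =ᵐ[volume] fun t => L x (t + K) :=
    hinv K x _ (coeFn_translateLp K x)
  obtain ⟨S, hS⟩ := L.exists_boundedContinuous_ae_eq
    (exists_continuous_ae_eq_of_translateLp_comm ENNReal.ofNat_ne_top L.continuous hL)
  have hS_translate (K : ℝ) (x : Lp ℂ 2 (volume : Measure ℝ)) (t : ℝ) :
      S (translateLp K x) t = S x (t + K) := by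
    refine congrFun (((S _).continuous.ae_eq_iff_eq volume
      ((S x).continuous.comp (continuous_add_const K))).1 ?_) t
    exact (hS _).symm.trans ((hL K x).trans
      ((measurePreserving_add_right volume K).quasiMeasurePreserving.ae_eq_comp (hS x)))
  set g := (InnerProductSpace.toDual ℂ _).symm ((BoundedContinuousFunction.evalCLM ℂ 0).comp S)
  have hg_reflect : MemLp (fun v => conj (g (-v))) 2 volume :=
    ((Lp.memLp g).comp_measurePreserving (Measure.measurePreserving_neg volume)).star
  refine ⟨hg_reflect.toLp, fun x => ?_⟩
  filter_upwards [hS x] with t ht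
  rw [ht, ← inner_translateLp_eq_integral_mul g x t hg_reflect.coeFn_toLp,
    InnerProductSpace.toDual_symm_apply, ContinuousLinearMap.comp_apply,
    BoundedContinuousFunction.evalCLM_apply, hS_translate, zero_add]
end

section
/- Let a < b be real numbers and let h(t) = (1/√(2π)) ∫_a^b e^{iwt} dw. Then ∫_{-∞}^{∞} |h(t)|² dt = b − a and ∫_{-∞}^{0} |h(t)|² dt = (b − a)/2. -/
/-!
For `t ≠ 0` we have `h t = (e^{ibt} - e^{iat}) / (i t √(2π))`, hence
`‖h t‖² = (1 - cos ((b - a) t)) / (π t²)`, an even function of `t`. Both claims therefore reduce to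
`∫₀^∞ (1 - cos (c t)) / t² dt = π c / 2` for `c > 0`. To compute it, write `1 / t² = ∫₀^∞ x e^{-t x} dx`
and swap the integrals (Tonelli): the Laplace transform `∫₀^∞ (1 - cos (c t)) e^{-x t} dt` equals
`c² / (x (x² + c²))`, which leaves `∫₀^∞ c² / (x² + c²) dx = π c / 2`.
-/

open MeasureTheory Real Set

theorem lintegral_ofReal_eq_ofReal_integral_of_ne_zero {α : Type*} [MeasurableSpace α]
    {μ : Measure α} {f : α → ℝ} (hf : 0 ≤ᵐ[μ] f) (h : ∫ a, f a ∂μ ≠ 0) :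
    ∫⁻ a, ENNReal.ofReal (f a) ∂μ = ENNReal.ofReal (∫ a, f a ∂μ) :=
  (ofReal_integral_eq_lintegral_ofReal (Integrable.of_integral_ne_zero h) hf).symm

theorem Function.Even.integral_Iio_zero {E : Type*} [NormedAddCommGroup E] [NormedSpace ℝ E]
    {f : ℝ → E} (hf : Function.Even f) : ∫ x in Iio 0, f x = ∫ x in Ioi 0, f x := by
  have h := integral_comp_neg_Ioi 0 f
  simp only [show ∀ x, f (-x) = f x from hf, neg_zero] at h
  rw [h, integral_Iic_eq_integral_Iio]

theorem Function.Even.integral_eq_two_mul_integral_Ioi {f : ℝ → ℝ} (hf : Function.Even f) :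
    ∫ x, f x = 2 * ∫ x in Ioi 0, f x := by
  rw [← integral_comp_abs]
  congr 1 with x
  rcases abs_choice x with hx | hx <;> rw [hx]
  exact (hf x).symm

theorem integral_Ioi_mul_exp_neg_mul {t : ℝ} (ht : 0 < t) :
    ∫ x in Ioi 0, x * exp (-(t * x)) = (t ^ 2)⁻¹ := by
  convert integral_rpow_mul_exp_neg_mul_Ioi two_pos ht using 1 <;> norm_num

theorem integral_Ioi_cos_mul_mul_exp_neg_mul {x : ℝ} (hx : 0 < x) (c : ℝ) :
    ∫ t in Ioi 0, cos (c * t) * exp (-(x * t)) = x / (x ^ 2 + c ^ 2) := by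
  have hz : (-x + c * Complex.I).re < 0 := by simpa using hx
  have hre : ∀ t : ℝ, cos (c * t) * exp (-(x * t)) =
      RCLike.re (Complex.exp ((-x + c * Complex.I) * t)) := fun t => by
    simp [Complex.exp_re, mul_comm]
  simp_rw [hre]
  rw [integral_re (integrableOn_exp_mul_complex_Ioi hz 0), integral_exp_mul_complex_Ioi hz 0]
  simp [Complex.div_re, Complex.normSq_apply, sq]

theorem integral_Ioi_one_sub_cos_mul_mul_exp_neg_mul {x : ℝ} (hx : 0 < x) (c : ℝ) :
    ∫ t in Ioi 0, (1 - cos (c * t)) * exp (-(x * t)) = c ^ 2 / (x * (x ^ 2 + c ^ 2)) := by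
  have hexp_int : IntegrableOn (fun t => exp (-(x * t))) (Ioi 0) := by
    simpa using integrableOn_exp_mul_Ioi (neg_neg_of_pos hx) 0
  have hexp : ∫ t in Ioi 0, exp (-(x * t)) = x⁻¹ := by
    simpa using integral_exp_mul_Ioi (neg_neg_of_pos hx) 0
  have hcos_int : IntegrableOn (fun t => cos (c * t) * exp (-(x * t))) (Ioi 0) :=
    Integrable.of_integral_ne_zero (by rw [integral_Ioi_cos_mul_mul_exp_neg_mul hx]; positivity)
  simp_rw [sub_mul, one_mul]
  rw [integral_sub hexp_int hcos_int, hexp, integral_Ioi_cos_mul_mul_exp_neg_mul hx]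
  have : x ^ 2 + c ^ 2 ≠ 0 := by positivity
  field_simp
  ring

theorem integral_Ioi_sq_div_sq_add_sq {c : ℝ} (hc : 0 < c) :
    ∫ x in Ioi 0, c ^ 2 / (x ^ 2 + c ^ 2) = π * c / 2 := by
  have h : ∀ x : ℝ, c ^ 2 / (x ^ 2 + c ^ 2) = (1 + (c⁻¹ * x) ^ 2)⁻¹ := fun x => by
    field_simp; ring
  simp_rw [h]
  rw [integral_comp_mul_left_Ioi (fun x => (1 + x ^ 2)⁻¹) 0 (inv_pos.2 hc)]
  simp
  ring

theorem lintegral_Ioi_one_sub_cos_mul_div_sq {c : ℝ} (hc : 0 < c) :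
    ∫⁻ t in Ioi 0, ENNReal.ofReal ((1 - cos (c * t)) / t ^ 2) = ENNReal.ofReal (π * c / 2) := by
  have one_sub_cos_nonneg : ∀ t, 0 ≤ 1 - cos (c * t) := fun t => sub_nonneg.2 (cos_le_one _)
  calc ∫⁻ t in Ioi 0, ENNReal.ofReal ((1 - cos (c * t)) / t ^ 2)
      = ∫⁻ t in Ioi 0, ∫⁻ x in Ioi 0,
          ENNReal.ofReal (1 - cos (c * t)) * ENNReal.ofReal (x * exp (-(t * x))) := by
        refine setLIntegral_congr_fun measurableSet_Ioi fun t (ht : 0 < t) => ?_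
        have hinv_sq : ∫⁻ x in Ioi 0, ENNReal.ofReal (x * exp (-(t * x))) =
            ENNReal.ofReal (t ^ 2)⁻¹ := by
          rw [lintegral_ofReal_eq_ofReal_integral_of_ne_zero, integral_Ioi_mul_exp_neg_mul ht]
          · exact (ae_restrict_mem measurableSet_Ioi).mono fun x (hx : 0 < x) => by positivity
          · rw [integral_Ioi_mul_exp_neg_mul ht]; positivity
        rw [lintegral_const_mul _ (by fun_prop), hinv_sq, div_eq_mul_inv,
          ENNReal.ofReal_mul (one_sub_cos_nonneg t)]
    _ = ∫⁻ x in Ioi 0, ∫⁻ t in Ioi 0,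
          ENNReal.ofReal (1 - cos (c * t)) * ENNReal.ofReal (x * exp (-(t * x))) :=
        lintegral_lintegral_swap (by fun_prop)
    _ = ∫⁻ x in Ioi 0, ENNReal.ofReal (c ^ 2 / (x ^ 2 + c ^ 2)) := by
        refine setLIntegral_congr_fun measurableSet_Ioi fun x (hx : 0 < x) => ?_
        have hlaplace : ∫⁻ t in Ioi 0, ENNReal.ofReal ((1 - cos (c * t)) * exp (-(x * t))) =
            ENNReal.ofReal (c ^ 2 / (x * (x ^ 2 + c ^ 2))) := by
          rw [lintegral_ofReal_eq_ofReal_integral_of_ne_zero,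
            integral_Ioi_one_sub_cos_mul_mul_exp_neg_mul hx]
          · exact ae_of_all _ fun t => mul_nonneg (one_sub_cos_nonneg t) (exp_pos _).le
          · rw [integral_Ioi_one_sub_cos_mul_mul_exp_neg_mul hx]; positivity
        have hfactor : ∀ t, ENNReal.ofReal (1 - cos (c * t)) * ENNReal.ofReal (x * exp (-(t * x)))
            = ENNReal.ofReal x * ENNReal.ofReal ((1 - cos (c * t)) * exp (-(x * t))) := fun t => by
          rw [← ENNReal.ofReal_mul (one_sub_cos_nonneg t), ← ENNReal.ofReal_mul hx.le]
          ring_nf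
        simp_rw [hfactor]
        rw [lintegral_const_mul _ (by fun_prop), hlaplace, ← ENNReal.ofReal_mul hx.le]
        congr 1
        field_simp
    _ = ENNReal.ofReal (π * c / 2) := by
        rw [lintegral_ofReal_eq_ofReal_integral_of_ne_zero, integral_Ioi_sq_div_sq_add_sq hc]
        · exact ae_of_all _ fun x => by positivity
        · rw [integral_Ioi_sq_div_sq_add_sq hc]; positivity

theorem integral_Ioi_one_sub_cos_mul_div_sq {c : ℝ} (hc : 0 < c) :
    ∫ t in Ioi 0, (1 - cos (c * t)) / t ^ 2 = π * c / 2 := by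
  rw [integral_eq_lintegral_of_nonneg_ae, lintegral_Ioi_one_sub_cos_mul_div_sq hc,
    ENNReal.toReal_ofReal (by positivity)]
  · exact ae_of_all _ fun t => div_nonneg (sub_nonneg.2 (cos_le_one _)) (sq_nonneg t)
  · exact (by fun_prop : Measurable fun t => (1 - cos (c * t)) / t ^ 2).aestronglyMeasurable

theorem norm_exp_I_mul_sub_exp_I_mul_sq (x y : ℝ) :
    ‖Complex.exp (Complex.I * x) - Complex.exp (Complex.I * y)‖ ^ 2 = 2 * (1 - cos (x - y)) := by
  have : Complex.exp (Complex.I * x) - Complex.exp (Complex.I * y) =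
      Complex.exp (Complex.I * y) * (Complex.exp (Complex.I * ↑(x - y)) - 1) := by
    rw [mul_sub, ← Complex.exp_add]; push_cast; ring_nf
  rw [this, norm_mul, Complex.norm_exp_I_mul_ofReal, one_mul,
    Complex.norm_exp_I_mul_ofReal_sub_one, Real.norm_eq_abs, sq_abs, mul_pow, sin_sq_eq_half_sub]
  ring_nf

theorem norm_intervalIntegral_exp_I_mul_sq (a b : ℝ) {t : ℝ} (ht : t ≠ 0) :
    ‖∫ w in a..b, Complex.exp (Complex.I * w * t)‖ ^ 2 = 2 * (1 - cos ((b - a) * t)) / t ^ 2 := by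
  have hIt : Complex.I * t ≠ 0 := mul_ne_zero Complex.I_ne_zero (by exact_mod_cast ht)
  have hintegral : ∫ w in a..b, Complex.exp (Complex.I * w * t) =
      (Complex.exp (Complex.I * ↑(b * t)) - Complex.exp (Complex.I * ↑(a * t))) /
        (Complex.I * t) := by
    simp_rw [mul_right_comm Complex.I _ (t : ℂ)]
    rw [integral_exp_mul_complex hIt]
    push_cast; ring_nf
  rw [hintegral, norm_div, div_pow, norm_exp_I_mul_sub_exp_I_mul_sq, norm_mul, Complex.norm_I, one_mul,
    Complex.norm_real, Real.norm_eq_abs, sq_abs, ← sub_mul]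

/-- The inverse Fourier transform `h` of the indicator of `[a,b]`
has total energy `b - a`, and half of the energy lies on the negative half-line. -/
theorem energy_of_inverse_fourier_indicator (a b : ℝ) (hab : a < b)
    (h : ℝ → ℂ)
    (hdef : ∀ t : ℝ, h t =
      (Real.sqrt (2 * π))⁻¹ * ∫ w in a..b, Complex.exp (Complex.I * w * t)) :
    (∫ t : ℝ, ‖h t‖ ^ 2) = b - a ∧
    (∫ t in Set.Iio (0 : ℝ), ‖h t‖ ^ 2) = (b - a) / 2 := by
  set g : ℝ → ℝ := fun t => (1 - cos ((b - a) * t)) / t ^ 2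
  have hg_even : Function.Even g := fun t => by simp only [g, mul_neg, cos_neg, neg_sq]
  have hg_Ioi : ∫ t in Ioi 0, g t = π * (b - a) / 2 :=
    integral_Ioi_one_sub_cos_mul_div_sq (sub_pos.2 hab)
  have hnorm : ∀ᵐ t : ℝ, ‖h t‖ ^ 2 = π⁻¹ * g t := by
    filter_upwards [compl_mem_ae_iff.2 (measure_singleton (0 : ℝ))] with t ht
    rw [hdef, norm_mul, mul_pow, norm_intervalIntegral_exp_I_mul_sq a b ht, Complex.norm_real,
      Real.norm_eq_abs, sq_abs, inv_pow, sq_sqrt (by positivity)]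
    simp only [g]
    field_simp
  constructor
  · rw [integral_congr_ae hnorm, integral_const_mul, hg_even.integral_eq_two_mul_integral_Ioi,
      hg_Ioi]
    field_simp
  · rw [integral_congr_ae (ae_restrict_of_ae hnorm), integral_const_mul,
      hg_even.integral_Iio_zero, hg_Ioi]
    field_simp
end

section
/- For every fixed T > 0, the limit as λ → ∞ of ∫_{-∞}^{-T} (1 − cos(λt))/(π t²) dt exists and equals ∫_{-∞}^{-T} 1/(π t²) dt = 1/(πT); in particular, for fixed delay T > 0 the distance d(T) from the ideal filter with bandpass of length λ = b − a to the filters realizable with delay T converges to the constant c(T) = 1/√(πT) as λ → ∞, while the angle θ(T) = arcsin(d(T)/√λ) tends to 0. -/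
/-! On `(-∞, -T)` the kernel `1/(πt²)` is integrable with integral `1/(πT)`, so the integral of
`(1 - cos (λt))/(πt²)` is `1/(πT)` minus the cosine transform at `λ` of an integrable function,
which tends to `0` by the Riemann–Lebesgue lemma. The limits of `d(T)` and `θ(T)` follow from the
continuity of `√` and `arcsin` and from `√λ → ∞`. -/

open MeasureTheory Real Filter
open Set Topology

lemma one_div_mul_sq_eq_inv_mul_rpow (c : ℝ) {x : ℝ} (hx : 0 < x) :
    1 / (c * x ^ 2) = c⁻¹ * x ^ (-2 : ℝ) := by
  rw [rpow_neg hx.le, rpow_two, one_div, mul_inv]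

lemma integrableOn_Ioi_one_div_mul_sq (c : ℝ) {T : ℝ} (hT : 0 < T) :
    IntegrableOn (fun x ↦ 1 / (c * x ^ 2)) (Ioi T) :=
  IntegrableOn.congr_fun
    ((integrableOn_Ioi_rpow_of_lt (by norm_num : (-2 : ℝ) < -1) hT).const_mul c⁻¹)
    (fun x hx ↦ (one_div_mul_sq_eq_inv_mul_rpow c (hT.trans hx)).symm) measurableSet_Ioi

lemma integral_Ioi_one_div_mul_sq (c : ℝ) {T : ℝ} (hT : 0 < T) :
    ∫ x in Ioi T, 1 / (c * x ^ 2) = 1 / (c * T) := by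
  rw [setIntegral_congr_fun measurableSet_Ioi
      (fun x hx ↦ one_div_mul_sq_eq_inv_mul_rpow c (hT.trans hx)),
    integral_const_mul, integral_Ioi_rpow_of_lt (by norm_num) hT]
  norm_num [rpow_neg_one]
  ring

lemma integrableOn_Iio_neg_one_div_mul_sq (c : ℝ) {T : ℝ} (hT : 0 < T) :
    IntegrableOn (fun t ↦ 1 / (c * t ^ 2)) (Iio (-T)) := by
  have h := integrableOn_Ioi_one_div_mul_sq c hT
  rw [← neg_neg T] at h
  simpa using h.comp_neg_Iio

lemma integral_Iio_neg_one_div_mul_sq (c : ℝ) {T : ℝ} (hT : 0 < T) :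
    ∫ t in Iio (-T), 1 / (c * t ^ 2) = 1 / (c * T) := by
  rw [← integral_Iic_eq_integral_Iio, ← integral_comp_neg_Ioi]
  simpa using integral_Ioi_one_div_mul_sq c hT

lemma re_fourierChar_smul_ofReal (t w x : ℝ) :
    (Real.fourierChar (-(t * (w / (2 * π)))) • (x : ℂ)).re = cos (w * t) * x := by
  rw [Circle.smul_def, smul_eq_mul, Real.fourierChar_apply, Complex.re_mul_ofReal,
    Complex.exp_ofReal_mul_I_re, ← cos_neg]
  field_simp

theorem tendsto_integral_cos_mul_cocompact {f : ℝ → ℝ} (hf : Integrable f) :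
    Tendsto (fun w ↦ ∫ t, cos (w * t) * f t) (cocompact ℝ) (𝓝 0) := by
  -- `Real.fourierChar x = exp (2πix)`, so frequency `w` corresponds to `w / (2π)`.
  have hscale : Tendsto (fun w : ℝ ↦ w / (2 * π)) (cocompact ℝ) (cocompact ℝ) :=
    (Homeomorph.mulRight₀ (2 * π)⁻¹ (by positivity)).map_cocompact.le
  have h := (Complex.continuous_re.tendsto 0).comp
    ((Real.tendsto_integral_exp_smul_cocompact fun t ↦ (f t : ℂ)).comp hscale)
  rw [Complex.zero_re] at h
  refine h.congr fun w ↦ ?_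
  have hint : Integrable fun t ↦ Real.fourierChar (-(t * (w / (2 * π)))) • (f t : ℂ) := by
    simpa only [Real.inner_apply] using
      (Real.fourierIntegral_convergent_iff (f := fun t ↦ (f t : ℂ)) (w / (2 * π))).2 hf.ofReal
  simp only [Function.comp_apply]
  rw [← RCLike.re_to_complex, ← integral_re hint]
  simp only [RCLike.re_to_complex, re_fourierChar_smul_ofReal]

theorem tendsto_setIntegral_cos_mul_cocompact {f : ℝ → ℝ} {s : Set ℝ} (hs : MeasurableSet s)
    (hf : IntegrableOn f s) :
    Tendsto (fun w ↦ ∫ t in s, cos (w * t) * f t) (cocompact ℝ) (𝓝 0) := by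
  refine (tendsto_integral_cos_mul_cocompact (hf.integrable_indicator hs)).congr fun w ↦ ?_
  simp_rw [← integral_indicator hs, indicator_mul_right]

theorem tendsto_setIntegral_one_sub_cos_mul_cocompact {f : ℝ → ℝ} {s : Set ℝ}
    (hs : MeasurableSet s) (hf : IntegrableOn f s) :
    Tendsto (fun w ↦ ∫ t in s, (1 - cos (w * t)) * f t) (cocompact ℝ) (𝓝 (∫ t in s, f t)) := by
  have hcos (w : ℝ) : IntegrableOn (fun t ↦ cos (w * t) * f t) s :=
    hf.bdd_mul (by fun_prop) (Eventually.of_forall fun t ↦ by simpa using abs_cos_le_one (w * t))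
  have h := (tendsto_setIntegral_cos_mul_cocompact hs hf).const_sub (∫ t in s, f t)
  rw [sub_zero] at h
  refine h.congr fun w ↦ ?_
  simp_rw [sub_mul, one_mul]
  rw [integral_sub hf (hcos w)]

/-- For a fixed delay `T > 0`, as the bandwidth `λ → ∞` the squared
distance `d(T)²` to the filters realizable with delay `T` converges to
`∫_{-∞}^{-T} 1/(πt²) dt = 1/(πT)`, so `d(T) → 1/√(πT)`, while the angle
`θ(T) = arcsin(d(T)/√λ)` tends to `0`. -/
theorem distance_limit_as_bandwidth_grows (T : ℝ) (hT : 0 < T) :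
    (∫ t in Set.Iio (-T), 1 / (π * t ^ 2)) = 1 / (π * T) ∧
    Tendsto (fun lam : ℝ =>
        ∫ t in Set.Iio (-T), (1 - Real.cos (lam * t)) / (π * t ^ 2))
      atTop (nhds (1 / (π * T))) ∧
    Tendsto (fun lam : ℝ =>
        Real.sqrt (∫ t in Set.Iio (-T), (1 - Real.cos (lam * t)) / (π * t ^ 2)))
      atTop (nhds (1 / Real.sqrt (π * T))) ∧
    Tendsto (fun lam : ℝ => Real.arcsin
        (Real.sqrt (∫ t in Set.Iio (-T), (1 - Real.cos (lam * t)) / (π * t ^ 2)) /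
          Real.sqrt lam))
      atTop (nhds 0) := by
  have hint := integrableOn_Iio_neg_one_div_mul_sq π hT
  have hval := integral_Iio_neg_one_div_mul_sq π hT
  have hdist_sq : Tendsto (fun lam : ℝ ↦
      ∫ t in Set.Iio (-T), (1 - Real.cos (lam * t)) / (π * t ^ 2))
      atTop (nhds (1 / (π * T))) := by
    simp_rw [div_eq_mul_one_div (1 - cos _) (π * _ ^ 2), ← hval]
    exact (tendsto_setIntegral_one_sub_cos_mul_cocompact measurableSet_Iio hint).mono_left
      atTop_le_cocompact
  have hdist : Tendsto (fun lam : ℝ ↦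
      Real.sqrt (∫ t in Set.Iio (-T), (1 - Real.cos (lam * t)) / (π * t ^ 2)))
      atTop (nhds (1 / Real.sqrt (π * T))) := by
    have h := (continuous_sqrt.tendsto _).comp hdist_sq
    rwa [one_div, sqrt_inv, ← one_div] at h
  refine ⟨hval, hdist_sq, hdist, ?_⟩
  simpa only [Function.comp_def, arcsin_zero] using
    (continuous_arcsin.tendsto 0).comp (hdist.div_atTop tendsto_sqrt_atTop)
end

section
/- For every fixed T > 0, the limit as λ → 0⁺ of (1/λ) ∫_{-∞}^{-T} (1 − cos(λt))/(π t²) dt equals 1/2. Consequently, for fixed delay T > 0, as the bandpass length b − a → 0 the distance d(T) from the ideal filter L_{[a,b]} to the filters realizable with delay T tends to 0, while the angle θ(T) = arcsin(d(T)/√(b−a)) tends to π/4. -/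
/-!
Substituting `v = λ|t|` turns `d(T)²/λ` into `π⁻¹ ∫_{λT}^∞ (1 - cos v)/v² dv`, so everything reduces
to the integrability of `(1 - cos v)/v²` and the value `∫₀^∞ (1 - cos v)/v² dv = π/2`. The latter
follows from `v⁻² = ∫₀^∞ s e^{-sv} ds` and Fubini, since for fixed `s > 0` the Laplace transform
`∫₀^∞ (1 - cos v) s e^{-sv} dv` equals `1/(1 + s²)`, whose integral over `(0, ∞)` is `π/2`.
-/

open MeasureTheory Real Filter Set Topology

lemma one_sub_cos_div_sq_nonneg (v : ℝ) : 0 ≤ (1 - cos v) / v ^ 2 :=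
  div_nonneg (by linarith [cos_le_one v]) (sq_nonneg v)

lemma one_sub_cos_div_sq_le_half (v : ℝ) : (1 - cos v) / v ^ 2 ≤ 1 / 2 := by
  rcases eq_or_ne v 0 with rfl | hv
  · simp
  · rw [div_le_iff₀ (by positivity)]
    linarith [one_sub_sq_div_two_le_cos (x := v)]

lemma one_sub_cos_div_sq_le (v : ℝ) : (1 - cos v) / v ^ 2 ≤ 5 / 2 * (1 + v ^ 2)⁻¹ := by
  have hmul : (1 - cos v) / v ^ 2 * v ^ 2 = 1 - cos v := by
    rcases eq_or_ne v 0 with rfl | hv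
    · simp
    · exact div_mul_cancel₀ _ (by positivity)
  rw [← div_eq_mul_inv, le_div_iff₀ (by positivity), mul_add, mul_one, hmul]
  linarith [one_sub_cos_div_sq_le_half v, neg_one_le_cos v]

lemma integrable_one_sub_cos_div_sq : Integrable fun v : ℝ => (1 - cos v) / v ^ 2 := by
  refine (integrable_inv_one_add_sq.const_mul (5 / 2)).mono'
    (Measurable.aestronglyMeasurable (by fun_prop)) ?_
  filter_upwards with v
  rw [norm_of_nonneg (one_sub_cos_div_sq_nonneg v)]
  exact one_sub_cos_div_sq_le v

lemma integral_mul_exp_neg_mul_Ioi {v : ℝ} (hv : 0 < v) :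
    ∫ s in Ioi (0 : ℝ), s * exp (-(s * v)) = (v ^ 2)⁻¹ := by
  have h := integral_rpow_mul_exp_neg_mul_Ioi (by norm_num : (0 : ℝ) < 2) hv
  norm_num [Real.Gamma_two, mul_comm v] at h
  exact h

lemma integrableOn_mul_exp_neg_mul_Ioi {v : ℝ} (hv : 0 < v) :
    IntegrableOn (fun s : ℝ => s * exp (-(s * v))) (Ioi 0) := by
  have h := integrableOn_rpow_mul_exp_neg_mul_rpow (by norm_num : (-1 : ℝ) < 1) one_pos hv
  simpa [mul_comm v] using h

lemma hasDerivAt_laplace_one_sub_cos (s v : ℝ) :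
    HasDerivAt
      (fun v => -exp (-(s * v)) + s / (1 + s ^ 2) * (exp (-(s * v)) * (s * cos v - sin v)))
      ((1 - cos v) * (s * exp (-(s * v)))) v := by
  have he : HasDerivAt (fun v => exp (-(s * v))) (exp (-(s * v)) * -s) v := by
    simpa using ((hasDerivAt_id v).const_mul s).neg.exp
  have hc : HasDerivAt (fun v => s * cos v - sin v) (s * -sin v - cos v) v :=
    ((hasDerivAt_cos v).const_mul s).sub (hasDerivAt_sin v)
  refine (he.neg.add ((he.mul hc).const_mul (s / (1 + s ^ 2)))).congr_deriv ?_
  have hs : (1 : ℝ) + s ^ 2 ≠ 0 := by positivity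
  field_simp
  ring

lemma integrableOn_one_sub_cos_mul_exp_neg_mul_Ioi {s : ℝ} (hs : 0 < s) :
    IntegrableOn (fun v => (1 - cos v) * (s * exp (-(s * v)))) (Ioi 0) := by
  have hexp : IntegrableOn (fun v => exp (-(s * v))) (Ioi 0) := by
    simpa using integrableOn_exp_mul_Ioi (neg_lt_zero.2 hs) 0
  refine (hexp.const_mul (2 * s)).mono' (Measurable.aestronglyMeasurable (by fun_prop)) ?_
  filter_upwards with v
  rw [norm_of_nonneg (mul_nonneg (by linarith [cos_le_one v]) (by positivity)), mul_assoc]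
  exact mul_le_mul_of_nonneg_right (by linarith [neg_one_le_cos v]) (by positivity)

lemma integral_one_sub_cos_mul_exp_neg_mul_Ioi {s : ℝ} (hs : 0 < s) :
    ∫ v in Ioi (0 : ℝ), (1 - cos v) * (s * exp (-(s * v))) = (1 + s ^ 2)⁻¹ := by
  have hexp : Tendsto (fun v => exp (-(s * v))) atTop (nhds 0) :=
    tendsto_exp_atBot.comp (tendsto_neg_atTop_atBot.comp (tendsto_id.const_mul_atTop hs))
  have hosc : Tendsto (fun v => exp (-(s * v)) * (s * cos v - sin v)) atTop (nhds 0) := by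
    refine squeeze_zero_norm (fun v => ?_) (by simpa using hexp.mul_const (s + 1))
    rw [norm_mul, norm_of_nonneg (exp_pos _).le]
    gcongr
    calc ‖s * cos v - sin v‖ ≤ s * |cos v| + |sin v| := by
          simpa [abs_mul, abs_of_pos hs] using norm_sub_le (s * cos v) (sin v)
      _ ≤ s + 1 :=
          add_le_add (mul_le_of_le_one_right hs.le (abs_cos_le_one v)) (abs_sin_le_one v)
  rw [integral_Ioi_of_hasDerivAt_of_tendsto (Continuous.continuousWithinAt (by fun_prop))
    (fun v _ => hasDerivAt_laplace_one_sub_cos s v)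
    (integrableOn_one_sub_cos_mul_exp_neg_mul_Ioi hs)
    (by simpa using hexp.neg.add (hosc.const_mul (s / (1 + s ^ 2))))]
  simp only [mul_zero, neg_zero, exp_zero, cos_zero, sin_zero]
  have : (1 : ℝ) + s ^ 2 ≠ 0 := by positivity
  field_simp
  ring

theorem integral_one_sub_cos_div_sq_Ioi : ∫ v in Ioi (0 : ℝ), (1 - cos v) / v ^ 2 = π / 2 := by
  set μ := volume.restrict (Ioi (0 : ℝ))
  set F : ℝ → ℝ → ℝ := fun v s => (1 - cos v) * (s * exp (-(s * v)))
  have hslice : ∀ v ∈ Ioi (0 : ℝ), ∫ s, F v s ∂μ = (1 - cos v) / v ^ 2 := fun v hv => by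
    rw [integral_const_mul, integral_mul_exp_neg_mul_Ioi hv, div_eq_mul_inv]
  have hF : Integrable (Function.uncurry F) (μ.prod μ) := by
    refine (integrable_prod_iff (Continuous.aestronglyMeasurable (by fun_prop))).2 ⟨?_, ?_⟩
    · filter_upwards [ae_restrict_mem measurableSet_Ioi] with v hv
      exact (integrableOn_mul_exp_neg_mul_Ioi hv).const_mul (1 - cos v)
    · refine integrable_one_sub_cos_div_sq.integrableOn.congr ?_
      filter_upwards [ae_restrict_mem measurableSet_Ioi] with v hv
      rw [← hslice v hv]
      refine integral_congr_ae ?_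
      filter_upwards [ae_restrict_mem measurableSet_Ioi] with s (hs : 0 < s)
      exact (norm_of_nonneg (mul_nonneg (by linarith [cos_le_one v]) (by positivity))).symm
  calc ∫ v in Ioi (0 : ℝ), (1 - cos v) / v ^ 2 = ∫ v, ∫ s, F v s ∂μ ∂μ :=
        (setIntegral_congr_fun measurableSet_Ioi hslice).symm
    _ = ∫ s, ∫ v, F v s ∂μ ∂μ := integral_integral_swap hF
    _ = ∫ s in Ioi (0 : ℝ), (1 + s ^ 2)⁻¹ :=
        setIntegral_congr_fun measurableSet_Ioi fun s hs =>
          integral_one_sub_cos_mul_exp_neg_mul_Ioi hs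
    _ = π / 2 := by rw [integral_Ioi_inv_one_add_sq, arctan_zero, sub_zero]

lemma integral_Iio_one_sub_cos_mul_div_sq {lam : ℝ} (hlam : 0 < lam) (T : ℝ) :
    ∫ t in Iio (-T), (1 - cos (lam * t)) / (π * t ^ 2)
      = lam / π * ∫ v in Ioi (lam * T), (1 - cos v) / v ^ 2 := by
  have hscale : ∀ x : ℝ, (1 - cos (lam * -x)) / (π * (-x) ^ 2)
      = lam ^ 2 / π * ((1 - cos (lam * x)) / (lam * x) ^ 2) := fun x => by
    rcases eq_or_ne x 0 with rfl | hx
    · simp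
    · field_simp
      rw [cos_neg]
  rw [← integral_Iic_eq_integral_Iio, ← integral_comp_neg_Ioi, funext hscale, integral_const_mul,
    integral_comp_mul_left_Ioi (fun v => (1 - cos v) / v ^ 2) T hlam, smul_eq_mul]
  field_simp

lemma tendsto_integral_Ioi_one_sub_cos_div_sq {T : ℝ} (hT : 0 ≤ T) :
    Tendsto (fun lam => ∫ v in Ioi (lam * T), (1 - cos v) / v ^ 2) (𝓝[>] 0) (𝓝 (π / 2)) := by
  rw [← integral_one_sub_cos_div_sq_Ioi]
  refine integrable_one_sub_cos_div_sq.integrableOn.continuousWithinAt_Ici_primitive_Ioi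
    |>.tendsto.comp ?_
  refine tendsto_nhdsWithin_iff.2 ⟨?_, ?_⟩
  · exact ((continuous_mul_const T).tendsto' 0 0 (zero_mul T)).mono_left nhdsWithin_le_nhds
  · filter_upwards [self_mem_nhdsWithin] with lam (hlam : 0 < lam)
    exact mul_nonneg hlam.le hT

lemma arcsin_sqrt_one_half : arcsin √(1 / 2) = π / 4 := by
  rw [← arcsin_sin (x := π / 4) (by linarith [pi_pos]) (by linarith [pi_pos]), sin_pi_div_four]
  congr 1
  rw [sqrt_eq_iff_mul_self_eq_of_pos (by positivity)]
  ring_nf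
  norm_num

/-- For a fixed delay `T > 0`, as the bandwidth `λ → 0⁺` the ratio
`d(T)²/λ` tends to `1/2`; hence the distance `d(T)` tends to `0` while the angle
`θ(T) = arcsin(d(T)/√λ)` tends to `π/4`. -/
theorem distance_and_angle_limits_as_bandwidth_vanishes (T : ℝ) (hT : 0 < T) :
    Tendsto (fun lam : ℝ =>
        (1 / lam) * ∫ t in Set.Iio (-T), (1 - Real.cos (lam * t)) / (π * t ^ 2))
      (nhdsWithin 0 (Set.Ioi 0)) (nhds (1 / 2)) ∧
    Tendsto (fun lam : ℝ =>
        Real.sqrt (∫ t in Set.Iio (-T), (1 - Real.cos (lam * t)) / (π * t ^ 2)))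
      (nhdsWithin 0 (Set.Ioi 0)) (nhds 0) ∧
    Tendsto (fun lam : ℝ => Real.arcsin
        (Real.sqrt (∫ t in Set.Iio (-T), (1 - Real.cos (lam * t)) / (π * t ^ 2)) /
          Real.sqrt lam))
      (nhdsWithin 0 (Set.Ioi 0)) (nhds (π / 4)) := by
  set dSq : ℝ → ℝ := fun lam => ∫ t in Iio (-T), (1 - cos (lam * t)) / (π * t ^ 2)
  have hratio : Tendsto (fun lam => 1 / lam * dSq lam) (𝓝[>] 0) (𝓝 (1 / 2)) := by
    have hlim := (tendsto_integral_Ioi_one_sub_cos_div_sq hT.le).const_mul π⁻¹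
    rw [show π⁻¹ * (π / 2) = 1 / 2 by field_simp] at hlim
    refine hlim.congr' ?_
    filter_upwards [self_mem_nhdsWithin] with lam (hlam : 0 < lam)
    simp only [dSq, integral_Iio_one_sub_cos_mul_div_sq hlam]
    field_simp
  have hdSq : Tendsto dSq (𝓝[>] 0) (𝓝 0) := by
    have hlim := (tendsto_nhdsWithin_of_tendsto_nhds tendsto_id).mul hratio
    rw [zero_mul] at hlim
    refine hlim.congr' ?_
    filter_upwards [self_mem_nhdsWithin] with lam (hlam : 0 < lam)
    simp only [id]
    field_simp
  refine ⟨hratio, by simpa using hdSq.sqrt, ?_⟩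
  have hlim := (continuous_arcsin.tendsto _).comp hratio.sqrt
  rw [arcsin_sqrt_one_half] at hlim
  refine hlim.congr' ?_
  filter_upwards [self_mem_nhdsWithin] with lam (hlam : 0 < lam)
  simp only [Function.comp_apply, one_div_mul_eq_div, sqrt_div' _ hlam.le]
  rfl
end
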